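/- Let U ⊆ ℂ be a nonempty open connected set, let f, ζ, h : ℂ → ℂ be functions such that f and ζ are real-differentiable at every point of U, such that for all z ∈ U the Wirtinger equations ∂ζ/∂z̄(z) = h(z) and ∂f/∂z̄(z) + h(z)·f(z) = 0 hold, and suppose f is not identically zero on U. Then every zero of f in U has finite positive order: if z₀ ∈ U and f(z₀) = 0, there exist a positive integer n and a nonzero complex number c such that f(z)/(z − z₀)^n tends to c as z tends to z₀ within U \ {z₀}. -/

import Mathlib

/-!
Multiplying by `exp ζ` turns the equation `∂f/∂z̄ + (∂ζ/∂z̄) f = 0` into `∂(f e^ζ)/∂z̄ = 0`, so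
`g = f e^ζ` is holomorphic on `U`. It vanishes exactly where `f` does, hence is not identically
zero on the connected set `U` and has a finite order `n ≥ 1` at `z₀`: `g = (z - z₀)^n p` with `p`
analytic and `p z₀ ≠ 0`. Then `f/(z - z₀)^n = p e^{-ζ} → p z₀ e^{-ζ z₀}`.
-/

open Filter Topology

/-- The Wirtinger derivative ∂g/∂z̄ of `g : ℂ → ℂ` at `z`, defined via the real
Fréchet derivative as `(1/2)(Dg(z)(1) + i·Dg(z)(i))`. -/
noncomputable def wirtingerBar (g : ℂ → ℂ) (z : ℂ) : ℂ :=
  (1 / 2 : ℂ) * (fderiv ℝ g z 1 + Complex.I * fderiv ℝ g z Complex.I)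

open Complex

section Wirtinger

variable {f g ζ φ : ℂ → ℂ} {z : ℂ}

theorem wirtingerBar_eq_zero_iff :
    wirtingerBar f z = 0 ↔ fderiv ℝ f z I = I • fderiv ℝ f z 1 := by
  rw [wirtingerBar, smul_eq_mul]
  constructor <;> intro h
  · linear_combination (-2 * I) * h + fderiv ℝ f z I * I_sq
  · linear_combination (I / 2) * h + fderiv ℝ f z 1 / 2 * I_sq

theorem differentiableAt_complex_iff_wirtingerBar_eq_zero :
    DifferentiableAt ℂ f z ↔ DifferentiableAt ℝ f z ∧ wirtingerBar f z = 0 := by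
  rw [wirtingerBar_eq_zero_iff, differentiableAt_complex_iff_differentiableAt_real]

theorem wirtingerBar_mul (hf : DifferentiableAt ℝ f z) (hg : DifferentiableAt ℝ g z) :
    wirtingerBar (fun w ↦ f w * g w) z = f z * wirtingerBar g z + g z * wirtingerBar f z := by
  simp only [wirtingerBar, fderiv_fun_mul hf hg, add_apply, smul_apply, smul_eq_mul]
  ring

theorem wirtingerBar_comp_of_hasDerivAt {φ' : ℂ} (hφ : HasDerivAt φ φ' (ζ z))
    (hζ : DifferentiableAt ℝ ζ z) :
    wirtingerBar (fun w ↦ φ (ζ w)) z = φ' * wirtingerBar ζ z := by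
  have hcomp : fderiv ℝ (fun w ↦ φ (ζ w)) z = φ' • fderiv ℝ ζ z :=
    (hφ.comp_hasFDerivAt z hζ.hasFDerivAt).fderiv
  simp only [wirtingerBar, hcomp, smul_apply, smul_eq_mul]
  ring

theorem differentiableAt_complex_mul_cexp (hf : DifferentiableAt ℝ f z)
    (hζ : DifferentiableAt ℝ ζ z) (heq : wirtingerBar f z + wirtingerBar ζ z * f z = 0) :
    DifferentiableAt ℂ (fun w ↦ f w * cexp (ζ w)) z := by
  have hexp : DifferentiableAt ℝ (fun w ↦ cexp (ζ w)) z := hζ.cexp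
  refine differentiableAt_complex_iff_wirtingerBar_eq_zero.2 ⟨hf.mul hexp, ?_⟩
  rw [wirtingerBar_mul hf hexp, wirtingerBar_comp_of_hasDerivAt (hasDerivAt_exp (ζ z)) hζ]
  linear_combination cexp (ζ z) * heq

end Wirtinger

theorem AnalyticAt.exists_tendsto_div_pow_analyticOrderNatAt {𝕜 : Type*}
    [NontriviallyNormedField 𝕜] {g : 𝕜 → 𝕜} {z₀ : 𝕜} (hg : AnalyticAt 𝕜 g z₀)
    (hfin : analyticOrderAt g z₀ ≠ ⊤) :
    ∃ c, c ≠ 0 ∧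
      Tendsto (fun z ↦ g z / (z - z₀) ^ analyticOrderNatAt g z₀) (𝓝[≠] z₀) (𝓝 c) := by
  obtain ⟨p, hp, hp₀, hgp⟩ := hg.analyticOrderAt_ne_top.1 hfin
  refine ⟨p z₀, hp₀, (hp.continuousAt.tendsto.mono_left nhdsWithin_le_nhds).congr' ?_⟩
  filter_upwards [nhdsWithin_le_nhds hgp, self_mem_nhdsWithin] with z hz hne
  rw [hz, smul_eq_mul, mul_div_cancel_left₀ _ (pow_ne_zero _ (sub_ne_zero.2 hne))]

/-- If `f` and `ζ` are real-differentiable on a nonempty open connected set `U ⊆ ℂ`,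
satisfy `∂ζ/∂z̄ = h` and `∂f/∂z̄ + h·f = 0` on `U`, and `f` is not identically zero on `U`,
then every zero of `f` in `U` has finite positive order: there are `n ≥ 1` and `c ≠ 0`
with `f z / (z - z₀)^n → c` as `z → z₀` within `U \ {z₀}`. -/
theorem zero_order_of_wirtinger_eq (U : Set ℂ) (hU : IsOpen U)
    (hUconn : IsConnected U)
    (f ζ h : ℂ → ℂ)
    (hf : ∀ z ∈ U, DifferentiableAt ℝ f z)
    (hζ : ∀ z ∈ U, DifferentiableAt ℝ ζ z)
    (hζeq : ∀ z ∈ U, wirtingerBar ζ z = h z)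
    (hfeq : ∀ z ∈ U, wirtingerBar f z + h z * f z = 0)
    (hfne : ¬ ∀ z ∈ U, f z = 0) :
    ∀ z₀ ∈ U, f z₀ = 0 →
      ∃ n : ℕ, 0 < n ∧ ∃ c : ℂ, c ≠ 0 ∧
        Tendsto (fun z => f z / (z - z₀) ^ n) (𝓝[U \ {z₀}] z₀) (𝓝 c) := by
  intro z₀ hz₀ hfz₀
  set g : ℂ → ℂ := fun w ↦ f w * cexp (ζ w)
  have hg : AnalyticOnNhd ℂ g U := DifferentiableOn.analyticOnNhd (fun z hz ↦
    (differentiableAt_complex_mul_cexp (hf z hz) (hζ z hz)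
      (by rw [hζeq z hz]; exact hfeq z hz)).differentiableWithinAt) hU
  have hfin : analyticOrderAt g z₀ ≠ ⊤ := by
    obtain ⟨z₁, hz₁, hfz₁⟩ := not_forall₂.1 hfne
    refine hg.analyticOrderAt_ne_top_of_isPreconnected hUconn.isPreconnected hz₁ hz₀ ?_
    rw [(hg z₁ hz₁).analyticOrderAt_eq_zero.2 (mul_ne_zero hfz₁ (exp_ne_zero _))]
    exact ENat.zero_ne_top
  have hpos : 0 < analyticOrderNatAt g z₀ := by
    have hord : analyticOrderAt g z₀ ≠ 0 := (hg z₀ hz₀).analyticOrderAt_ne_zero.2 (by simp [g, hfz₀])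
    simp [Nat.pos_iff_ne_zero, analyticOrderNatAt, ENat.toNat_eq_zero, hord, hfin]
  obtain ⟨c, hc, hlim⟩ := (hg z₀ hz₀).exists_tendsto_div_pow_analyticOrderNatAt hfin
  refine ⟨_, hpos, c * cexp (-ζ z₀), mul_ne_zero hc (exp_ne_zero _), ?_⟩
  refine ((hlim.mono_left (nhdsWithin_mono _ (Set.sdiff_subset_compl _ _))).mul
    ((hζ z₀ hz₀).continuousAt.neg.cexp.tendsto.mono_left nhdsWithin_le_nhds)).congr fun z ↦ ?_
  simp only [g, Pi.neg_apply, exp_neg]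
  field_simp
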